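/- arXiv:math/0102080 — 3 statements merged into one kernel-verified Lean document; each statement's English description precedes it below -/
import Mathlib

section
/- For every complex number z with Re(z) ≥ 2 and every complex number ν with |Im(ν)| ≤ 1, one has Re(√(2z + ν²)) > |Re(ν)|, where the square root is taken with the principal branch of the logarithm. -/
open MeasureTheory ProbabilityTheory Set
open scoped ENNReal NNReal

noncomputable section

/-- `B` is a standard one-dimensional Brownian motion on the probability space `(Ω, μ)`:
measurable in `ω`, a.s. continuous paths, `B 0 = 0` a.s., Gaussian increments
`B t - B s ~ N(0, t - s)` for `0 ≤ s ≤ t`, and independent increments. -/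
def IsBrownianMotion {Ω : Type*} [MeasurableSpace Ω] (μ : Measure Ω) (B : ℝ → Ω → ℝ) : Prop :=
  IsProbabilityMeasure μ ∧
  (∀ t : ℝ, Measurable (B t)) ∧
  (∀ᵐ ω ∂μ, Continuous fun t => B t ω) ∧
  (∀ᵐ ω ∂μ, B 0 ω = 0) ∧
  (∀ s t : ℝ, 0 ≤ s → s ≤ t →
    μ.map (fun ω => B t ω - B s ω) = gaussianReal 0 ((t - s).toNNReal)) ∧
  (∀ (n : ℕ) (t : Fin (n + 1) → ℝ), (∀ i, 0 ≤ t i) → Monotone t →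
    iIndepFun
      (fun (i : Fin n) ω => B (t i.succ) ω - B (t i.castSucc) ω) μ)

/-- Yor's accumulation process `A_x^{(ν)} = ∫_0^x exp (2 (B_w + ν w)) dw`. -/
def yorA {Ω : Type*} (B : ℝ → Ω → ℝ) (ν x : ℝ) (ω : Ω) : ℝ :=
  ∫ w in Ioc (0 : ℝ) x, Real.exp (2 * (B w ω + ν * w))

/-- The modified Bessel function of the first kind, of complex order `μ`, at real `ξ`,
defined by its power series (powers via the principal branch). -/
def besselI (μ : ℂ) (ξ : ℝ) : ℂ :=
  ∑' n : ℕ, ((ξ : ℂ) / 2) ^ (μ + 2 * n) / ((n.factorial : ℂ) * Complex.Gamma (μ + n + 1))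

/-- The generalized Weber integral `D_ν(a, z)` of Carr–Schröder. -/
def Dnu (ν : ℂ) (a : ℝ) (z : ℂ) : ℂ :=
  Complex.exp (-(1 / (2 * a))) / a *
    ∫ x in Ioi (0 : ℝ),
      Complex.exp (-(x ^ 2 : ℝ) / (2 * a)) * (x : ℂ) ^ (ν + 3) *
        besselI ((2 * z + ν ^ 2) ^ (1 / 2 : ℂ)) (x / a)

/-- Kummer's confluent hypergeometric function `Φ(α, γ; w)`. -/
def kummerPhi (α γ w : ℂ) : ℂ :=
  ∑' n : ℕ, (ascPochhammer ℂ n).eval α / (ascPochhammer ℂ n).eval γ * w ^ n / n.factorial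

/-! The real part of the principal square root is `√((‖w‖ + Re w) / 2) ≥ √(Re w)`, and
`Re (2z + ν²) = 2 Re z + (Re ν)² - (Im ν)² > (Re ν)²` as `Re z ≥ 2` and `(Im ν)² ≤ 1`. -/

namespace Complex

theorem sqrt_re_le_re_cpow_inv_two (w : ℂ) : √(w.re) ≤ (w ^ (2⁻¹ : ℂ)).re := by
  rw [cpow_inv_two_re]
  gcongr
  linarith [re_le_norm w]

theorem re_sq_lt_re_two_mul_add_sq {z ν : ℂ} (hz : 2 ≤ z.re) (hν : |ν.im| ≤ 1) :
    ν.re ^ 2 < (2 * z + ν ^ 2).re := by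
  have him : ν.im ^ 2 ≤ 1 := (sq_le_one_iff_abs_le_one _).2 hν
  have hre : (2 * z + ν ^ 2).re = 2 * z.re + ν.re ^ 2 - ν.im ^ 2 := by
    simp only [add_re, mul_re, re_ofNat, im_ofNat, sq]
    ring
  linarith

end Complex

theorem stmt3 (z ν : ℂ) (hz : 2 ≤ z.re) (hν : |ν.im| ≤ 1) :
    |ν.re| < ((2 * z + ν ^ 2) ^ (1 / 2 : ℂ)).re := by
  rw [one_div]
  exact calc |ν.re| = √(ν.re ^ 2) := (Real.sqrt_sq_eq_abs _).symm
    _ < √((2 * z + ν ^ 2).re) :=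
        Real.sqrt_lt_sqrt (sq_nonneg _) (Complex.re_sq_lt_re_two_mul_add_sq hz hν)
    _ ≤ ((2 * z + ν ^ 2) ^ (2⁻¹ : ℂ)).re := Complex.sqrt_re_le_re_cpow_inv_two _

end
end

section
/- Let a > 0 be real, z a complex number with Re(z) ≥ 2, and ν a complex number with |Im(ν)| ≤ 1; set μ = √(2z+ν²) (principal branch). Then the integral D_ν(a, z) = (e^{−1/(2a)}/a) ∫_0^∞ e^{−x²/(2a)} x^{ν+3} I_μ(x/a) dx is absolutely convergent and equals Γ((ν+4+μ)/2) · (1/Γ(μ+1)) · Φ((ν+4+μ)/2, μ+1; 1/(2a)) · e^{−1/(2a)} · (2a)^{(ν+2−μ)/2}. -/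
open MeasureTheory ProbabilityTheory Set
open scoped ENNReal NNReal

noncomputable section

/-!
Expanding `I_μ` in its power series turns the integrand into a series of Gaussian moments
`x ^ (s - 1) * exp (-x² / (2a))`, each equal to `(2a) ^ (s/2) Γ(s/2) / 2`. The integrals of the
absolute values of the terms are dominated by an exponential series, because
`Γ(r + n) ≤ Γ(r) max(r, 1)ⁿ n!` while `|Γ(μ + n + 1)| ≥ n! |Γ(μ + 1)|`; so the series can be
integrated term by term, and `Γ(α + n) = Γ(α) (α)ₙ` turns the result into Kummer's series.
-/

open scoped Nat

namespace Complex

theorem Gamma_add_nat_eq_mul_ascPochhammer {s : ℂ} (hs : 0 < s.re) (n : ℕ) :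
    Gamma (s + n) = Gamma s * (ascPochhammer ℂ n).eval s := by
  have hs' : ∀ k : ℕ, s ≠ -k := fun k h => by
    have := congrArg re h
    simp only [neg_re, natCast_re] at this
    linarith [(k.cast_nonneg : (0 : ℝ) ≤ k)]
  rw [← Gamma_add_nat_div_Gamma_eq s hs', mul_div_cancel₀ _ (Gamma_ne_zero_of_re_pos hs)]

theorem ascPochhammer_eval_ne_zero_of_re_pos {s : ℂ} (hs : 0 < s.re) (n : ℕ) :
    (ascPochhammer ℂ n).eval s ≠ 0 :=
  right_ne_zero_of_mul <| Gamma_add_nat_eq_mul_ascPochhammer hs n ▸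
    Gamma_ne_zero_of_re_pos (by simpa using add_pos_of_pos_of_nonneg hs n.cast_nonneg)

theorem factorial_le_norm_ascPochhammer_eval {s : ℂ} (hs : 1 ≤ s.re) (n : ℕ) :
    (n ! : ℝ) ≤ ‖(ascPochhammer ℂ n).eval s‖ := by
  induction n with
  | zero => simp
  | succ n ih =>
    have hlin : (n : ℝ) + 1 ≤ ‖s + n‖ :=
      le_trans (by simp; linarith) (re_le_norm _)
    rw [ascPochhammer_succ_eval, norm_mul, Nat.factorial_succ, Nat.cast_mul, mul_comm]
    push_cast
    exact mul_le_mul ih hlin (by positivity) (norm_nonneg _)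

theorem factorial_mul_norm_Gamma_le {s : ℂ} (hs : 1 ≤ s.re) (n : ℕ) :
    (n ! : ℝ) * ‖Gamma s‖ ≤ ‖Gamma (s + n)‖ := by
  rw [Gamma_add_nat_eq_mul_ascPochhammer (by linarith) n, norm_mul, mul_comm]
  exact mul_le_mul_of_nonneg_left (factorial_le_norm_ascPochhammer_eval hs n) (norm_nonneg _)

theorem re_cpow_one_half_pos {w : ℂ} (hw : w ∈ slitPlane) : 0 < (w ^ (1 / 2 : ℂ)).re := by
  rw [cpow_def_of_ne_zero (slitPlane_ne_zero hw), exp_re]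
  have him : (log w * (1 / 2 : ℂ)).im = w.arg / 2 := by
    simp [log_im, div_eq_mul_inv]
  have hcos : 0 < Real.cos (log w * (1 / 2 : ℂ)).im := by
    rw [him]
    refine Real.cos_pos_of_mem_Ioo ⟨?_, ?_⟩
    · linarith [neg_pi_lt_arg w]
    · linarith [lt_of_le_of_ne (arg_le_pi w) (slitPlane_arg_ne_pi hw)]
  positivity

theorem re_add_two_mul_natCast_pos {s : ℂ} (hs : 0 < s.re) (n : ℕ) :
    0 < (s + 2 * n).re := by
  simpa using add_pos_of_pos_of_nonneg hs (by positivity : (0 : ℝ) ≤ 2 * n)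

end Complex

theorem Real.Gamma_add_nat_le {r : ℝ} (hr : 0 < r) (n : ℕ) :
    Gamma (r + n) ≤ Gamma r * max r 1 ^ n * n ! := by
  induction n with
  | zero => simp
  | succ n ih =>
    have hrn : 0 < r + n := by positivity
    have hlin : r + n ≤ max r 1 * (n + 1) := by
      nlinarith [le_max_left r 1, le_max_right r 1, (n.cast_nonneg : (0 : ℝ) ≤ n)]
    rw [Nat.cast_succ, ← add_assoc, Gamma_add_one hrn.ne', Nat.factorial_succ, Nat.cast_mul,
      Nat.cast_succ]
    calc (r + n) * Gamma (r + n) ≤ (max r 1 * (n + 1)) * (Gamma r * max r 1 ^ n * n !) :=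
          mul_le_mul hlin ih (Gamma_pos_of_pos hrn).le (by positivity)
      _ = Gamma r * max r 1 ^ (n + 1) * ((n + 1) * n !) := by ring

namespace MeasureTheory

variable {α E : Type*} [MeasurableSpace α] {μ : Measure α} [NormedAddCommGroup E]
  [CompleteSpace E]

theorem integrable_tsum_of_summable_integral_norm {F : ℕ → α → E}
    (hF : ∀ n, Integrable (F n) μ) (hsum : Summable fun n => ∫ a, ‖F n a‖ ∂μ) :
    Integrable (fun a => ∑' n, F n a) μ := by
  have hlt : ∑' n, ∫⁻ a, ‖F n a‖ₑ ∂μ < ∞ := by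
    simp_rw [← ofReal_integral_norm_eq_lintegral_enorm (hF _)]
    rw [← ENNReal.ofReal_tsum_of_nonneg (fun n => integral_nonneg fun _ => norm_nonneg _) hsum]
    exact ENNReal.ofReal_lt_top
  have hae : ∀ᵐ a ∂μ, Summable fun n => ‖F n a‖ :=
    summable_norm_of_tsum_eLpNorm_ne_top le_rfl (fun n => (hF n).1)
      (by simpa only [eLpNorm_one_eq_lintegral_enorm] using hlt.ne)
  refine ⟨aestronglyMeasurable_of_tendsto_ae Filter.atTop
    (fun k => Finset.aestronglyMeasurable_fun_sum (Finset.range k) fun n _ => (hF n).1) ?_, ?_⟩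
  · filter_upwards [hae] with a ha using ha.of_norm.hasSum.tendsto_sum_nat
  · calc ∫⁻ a, ‖∑' n, F n a‖ₑ ∂μ ≤ ∫⁻ a, ∑' n, ‖F n a‖ₑ ∂μ :=
          lintegral_mono fun _ => enorm_tsum_le_tsum_enorm
      _ = ∑' n, ∫⁻ a, ‖F n a‖ₑ ∂μ := lintegral_tsum fun n => (hF n).1.enorm
      _ < ∞ := hlt

end MeasureTheory

section GaussianMoments

variable {c : ℝ} {s : ℂ}

theorem norm_cpow_mul_exp_neg_sq_div {x : ℝ} (hx : 0 < x) :
    ‖(x : ℂ) ^ (s - 1) * Complex.exp (-(x ^ 2 : ℝ) / c)‖ =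
      x ^ (s.re - 1) * Real.exp (-x ^ 2 / c) := by
  rw [norm_mul, Complex.norm_cpow_eq_rpow_re_of_pos hx, Complex.norm_exp]
  norm_cast

theorem integrableOn_cpow_mul_exp_neg_sq_div (hc : 0 < c) (hs : 0 < s.re) :
    IntegrableOn (fun x : ℝ => (x : ℂ) ^ (s - 1) * Complex.exp (-(x ^ 2 : ℝ) / c)) (Ioi 0) := by
  refine Integrable.mono' (integrableOn_rpow_mul_exp_neg_mul_sq (inv_pos.2 hc)
    (by linarith : (-1 : ℝ) < s.re - 1)) ?_ ?_
  · refine ContinuousOn.aestronglyMeasurable (fun x hx => ?_) measurableSet_Ioi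
    refine ContinuousAt.continuousWithinAt (ContinuousAt.mul ?_ (by fun_prop))
    exact Complex.continuousAt_ofReal_cpow_const x _ (Or.inr (ne_of_gt hx))
  · filter_upwards [ae_restrict_mem measurableSet_Ioi] with x hx
    rw [norm_cpow_mul_exp_neg_sq_div hx, neg_div, neg_mul, div_eq_inv_mul]

theorem integral_norm_cpow_mul_exp_neg_sq_div (hc : 0 < c) (hs : 0 < s.re) :
    ∫ x in Ioi (0 : ℝ), ‖(x : ℂ) ^ (s - 1) * Complex.exp (-(x ^ 2 : ℝ) / c)‖ =
      c ^ (s.re / 2) * Real.Gamma (s.re / 2) / 2 := by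
  have h := integral_rpow_mul_exp_neg_mul_rpow two_pos (by linarith : (-1 : ℝ) < s.re - 1)
    (inv_pos.2 hc)
  rw [sub_add_cancel, Real.inv_rpow hc.le, ← Real.rpow_neg hc.le, neg_div, neg_neg] at h
  rw [setIntegral_congr_fun measurableSet_Ioi fun x hx => norm_cpow_mul_exp_neg_sq_div hx]
  convert h using 1
  · refine setIntegral_congr_fun measurableSet_Ioi fun x _ => ?_
    rw [Real.rpow_two, neg_div, neg_mul, div_eq_inv_mul]
  · ring

theorem integral_cpow_mul_exp_neg_sq_div (hc : 0 < c) (hs : 0 < s.re) :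
    ∫ x in Ioi (0 : ℝ), (x : ℂ) ^ (s - 1) * Complex.exp (-(x ^ 2 : ℝ) / c) =
      (c : ℂ) ^ (s / 2) * Complex.Gamma (s / 2) / 2 := by
  have hsubst := integral_comp_rpow_Ioi_of_pos two_pos
    (g := fun t : ℝ => (t : ℂ) ^ (s / 2 - 1) * Complex.exp (-(((c⁻¹ : ℝ) : ℂ) * t)))
  rw [Complex.integral_cpow_mul_exp_neg_mul_Ioi (by simpa using hs) (inv_pos.2 hc)] at hsubst
  have hintegrand : ∀ x ∈ Ioi (0 : ℝ),
      (x : ℂ) ^ (s - 1) * Complex.exp (-(x ^ 2 : ℝ) / c) =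
        2⁻¹ * (((2 : ℝ) * x ^ ((2 : ℝ) - 1)) • ((((x ^ (2 : ℝ) : ℝ)) : ℂ) ^ (s / 2 - 1) *
          Complex.exp (-(((c⁻¹ : ℝ) : ℂ) * (x ^ (2 : ℝ) : ℝ))))) := by
    intro x hx
    have hx0 : (x : ℂ) ≠ 0 := Complex.ofReal_ne_zero.2 (ne_of_gt hx)
    have harg : (x : ℂ).arg = 0 := Complex.arg_ofReal_of_nonneg (le_of_lt hx)
    have hpow : (((x ^ (2 : ℝ) : ℝ)) : ℂ) ^ (s / 2 - 1) = (x : ℂ) ^ (s - 1) / x := by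
      rw [Real.rpow_two, Complex.ofReal_pow,
        ← Complex.cpow_ofNat_mul' (by simp [harg, Real.pi_pos]) (by simp [harg, Real.pi_pos.le]),
        show (2 : ℂ) * (s / 2 - 1) = s - 1 - 1 by ring, Complex.cpow_sub _ _ hx0,
        Complex.cpow_one]
    rw [hpow, Real.rpow_two, show (2 : ℝ) - 1 = 1 by norm_num, Real.rpow_one, Complex.real_smul]
    push_cast
    field_simp
  rw [setIntegral_congr_fun measurableSet_Ioi hintegrand, integral_const_mul, hsubst,
    Complex.ofReal_inv, one_div, inv_inv]
  ring

end GaussianMoments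

theorem summable_rpow_Gamma_div_factorial_mul_norm_Gamma {c r : ℝ} (hc : 0 < c) (hr : 0 < r)
    {μ : ℂ} (hμ : 0 ≤ μ.re) :
    Summable fun n : ℕ => ((c ^ (μ.re + 2 * n))⁻¹ / (n ! * ‖Complex.Gamma (μ + n + 1)‖)) *
      (c ^ (r + n) * Real.Gamma (r + n) / 2) := by
  have hG : 0 < ‖Complex.Gamma (μ + 1)‖ :=
    norm_pos_iff.2 (Complex.Gamma_ne_zero_of_re_pos (by simp; linarith))
  set C := c ^ r * Real.Gamma r / (2 * c ^ μ.re * ‖Complex.Gamma (μ + 1)‖)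
  set R := max r 1
  refine Summable.of_nonneg_of_le (fun n => by positivity) (fun n => ?_)
    ((Real.summable_pow_div_factorial (R / c)).mul_left C)
  have hfac : (0 : ℝ) < n ! := by positivity
  have hGn : (n ! : ℝ) * ‖Complex.Gamma (μ + 1)‖ ≤ ‖Complex.Gamma (μ + n + 1)‖ := by
    simpa [add_right_comm] using Complex.factorial_mul_norm_Gamma_le (s := μ + 1) (by simpa) n
  rw [Real.rpow_add hc, Real.rpow_add hc, Real.rpow_natCast,
    Real.rpow_mul_natCast hc.le, Real.rpow_two]
  calc (c ^ μ.re * (c ^ 2) ^ n)⁻¹ / (n ! * ‖Complex.Gamma (μ + n + 1)‖) *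
        (c ^ r * c ^ n * Real.Gamma (r + n) / 2)
      = c ^ r * c ^ n * Real.Gamma (r + n) /
          (2 * c ^ μ.re * (c ^ 2) ^ n * (n ! * ‖Complex.Gamma (μ + n + 1)‖)) := by
        field_simp
    _ ≤ c ^ r * c ^ n * (Real.Gamma r * R ^ n * n !) /
          (2 * c ^ μ.re * (c ^ 2) ^ n * (n ! * (n ! * ‖Complex.Gamma (μ + 1)‖))) := by
        refine div_le_div₀ (by positivity) ?_ (by positivity) ?_
        · exact mul_le_mul_of_nonneg_left (Real.Gamma_add_nat_le hr n) (by positivity)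
        · exact mul_le_mul_of_nonneg_left (mul_le_mul_of_nonneg_left hGn hfac.le) (by positivity)
    _ = C * ((R / c) ^ n / n !) := by
        simp only [C, div_pow]
        field_simp
        ring

section Weber

variable {a : ℝ} {μ ν : ℂ}

def weberIntegrand (a : ℝ) (μ ν : ℂ) (x : ℝ) : ℂ :=
  Complex.exp (-(x ^ 2 : ℝ) / (2 * a)) * (x : ℂ) ^ (ν + 3) * besselI μ (x / a)

def weberCoeff (a : ℝ) (μ : ℂ) (n : ℕ) : ℂ :=
  (((2 * a : ℝ) : ℂ) ^ (μ + 2 * n))⁻¹ / (n ! * Complex.Gamma (μ + n + 1))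

def weberTerm (a : ℝ) (μ ν : ℂ) (n : ℕ) (x : ℝ) : ℂ :=
  weberCoeff a μ n *
    ((x : ℂ) ^ (ν + 4 + μ + 2 * n - 1) * Complex.exp (-(x ^ 2 : ℝ) / ((2 * a : ℝ) : ℂ)))

theorem weberIntegrand_eq_tsum (ha : 0 < a) {x : ℝ} (hx : 0 < x) :
    weberIntegrand a μ ν x = ∑' n, weberTerm a μ ν n x := by
  rw [weberIntegrand, besselI, ← tsum_mul_left]
  refine tsum_congr fun n => ?_
  have hx0 : (x : ℂ) ≠ 0 := Complex.ofReal_ne_zero.2 hx.ne'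
  have hc : 0 < 2 * a := by positivity
  have hsplit : (((x / a : ℝ) : ℂ) / 2) ^ (μ + 2 * n) =
      (x : ℂ) ^ (μ + 2 * n) * (((2 * a : ℝ) : ℂ) ^ (μ + 2 * n))⁻¹ := by
    rw [show ((x / a : ℝ) : ℂ) / 2 = (x : ℂ) * ((2 * a)⁻¹ : ℝ) by push_cast; ring,
      Complex.mul_cpow_ofReal_nonneg hx.le (inv_nonneg.2 hc.le), Complex.ofReal_inv,
      Complex.inv_cpow _ _ (by rw [Complex.arg_ofReal_of_nonneg hc.le]; exact Real.pi_ne_zero.symm)]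
  have hmerge :
      (x : ℂ) ^ (ν + 3) * (x : ℂ) ^ (μ + 2 * n) = (x : ℂ) ^ (ν + 4 + μ + 2 * n - 1) := by
    rw [← Complex.cpow_add _ _ hx0]
    ring_nf
  rw [weberTerm, weberCoeff, hsplit, ← hmerge]
  push_cast
  ring

theorem integrableOn_weberTerm (ha : 0 < a) (hα : 0 < (ν + 4 + μ).re) (n : ℕ) :
    IntegrableOn (weberTerm a μ ν n) (Ioi 0) :=
  (integrableOn_cpow_mul_exp_neg_sq_div (by positivity)
    (Complex.re_add_two_mul_natCast_pos hα n)).const_mul _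

theorem integral_norm_weberTerm (ha : 0 < a) (hα : 0 < (ν + 4 + μ).re) (n : ℕ) :
    ∫ x in Ioi (0 : ℝ), ‖weberTerm a μ ν n x‖ = ‖weberCoeff a μ n‖ *
      ((2 * a) ^ ((ν + 4 + μ).re / 2 + n) * Real.Gamma ((ν + 4 + μ).re / 2 + n) / 2) := by
  have hre : (ν + 4 + μ + 2 * n).re / 2 = (ν + 4 + μ).re / 2 + n := by simp; ring
  simp_rw [weberTerm, norm_mul (weberCoeff a μ n)]
  rw [integral_const_mul, integral_norm_cpow_mul_exp_neg_sq_div (by positivity)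
    (Complex.re_add_two_mul_natCast_pos hα n), hre]

theorem norm_weberCoeff (ha : 0 < a) (n : ℕ) :
    ‖weberCoeff a μ n‖ = ((2 * a) ^ (μ.re + 2 * n))⁻¹ / (n ! * ‖Complex.Gamma (μ + n + 1)‖) := by
  rw [weberCoeff, norm_div, norm_inv, Complex.norm_cpow_eq_rpow_re_of_pos (by positivity),
    norm_mul, Complex.norm_natCast]
  simp

theorem integral_weberTerm (ha : 0 < a) (hμ : 0 ≤ μ.re) (hα : 0 < (ν + 4 + μ).re) (n : ℕ) :
    ∫ x in Ioi (0 : ℝ), weberTerm a μ ν n x =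
      a * Complex.Gamma ((ν + 4 + μ) / 2) * (1 / Complex.Gamma (μ + 1)) *
          ((2 * a : ℝ) : ℂ) ^ ((ν + 2 - μ) / 2) *
        ((ascPochhammer ℂ n).eval ((ν + 4 + μ) / 2) / (ascPochhammer ℂ n).eval (μ + 1) *
          (1 / (2 * a)) ^ n / n !) := by
  have hα2 : 0 < ((ν + 4 + μ) / 2).re := by simpa using hα
  have hμ1 : 0 < (μ + 1).re := by simp; linarith
  have hc0 : ((2 * a : ℝ) : ℂ) ≠ 0 := Complex.ofReal_ne_zero.2 (by positivity)
  have hpow : ((2 * a : ℝ) : ℂ) ^ ((ν + 4 + μ) / 2 + n) = ((2 * a : ℝ) : ℂ) *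
      ((2 * a : ℝ) : ℂ) ^ ((ν + 2 - μ) / 2) * ((2 * a : ℝ) : ℂ) ^ (μ + 2 * n) /
        ((2 * a : ℝ) : ℂ) ^ n := by
    rw [eq_div_iff (pow_ne_zero n hc0), ← Complex.cpow_natCast, ← Complex.cpow_add _ _ hc0]
    nth_rw 2 [← Complex.cpow_one ((2 * a : ℝ) : ℂ)]
    rw [← Complex.cpow_add _ _ hc0, ← Complex.cpow_add _ _ hc0]
    ring_nf
  simp only [weberTerm]
  rw [integral_const_mul, integral_cpow_mul_exp_neg_sq_div (by positivity)
    (Complex.re_add_two_mul_natCast_pos hα n),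
    show (ν + 4 + μ + 2 * n) / 2 = (ν + 4 + μ) / 2 + n by ring,
    Complex.Gamma_add_nat_eq_mul_ascPochhammer hα2 n, hpow, weberCoeff,
    show μ + n + 1 = μ + 1 + n by ring, Complex.Gamma_add_nat_eq_mul_ascPochhammer hμ1 n]
  have hpoch := Complex.ascPochhammer_eval_ne_zero_of_re_pos hμ1 n
  have hΓ := Complex.Gamma_ne_zero_of_re_pos hμ1
  have hcpow : ((2 * a : ℝ) : ℂ) ^ (μ + 2 * n) ≠ 0 := Complex.cpow_ne_zero_iff.2 (Or.inl hc0)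
  rw [show (a : ℂ) = ((2 * a : ℝ) : ℂ) / 2 by push_cast; ring]
  generalize ((2 * a : ℝ) : ℂ) = c at *
  simp only [div_pow, one_pow]
  field_simp

theorem summable_integral_norm_weberTerm (ha : 0 < a) (hμ : 0 ≤ μ.re)
    (hα : 0 < (ν + 4 + μ).re) :
    Summable fun n => ∫ x in Ioi (0 : ℝ), ‖weberTerm a μ ν n x‖ := by
  simp_rw [integral_norm_weberTerm ha hα, norm_weberCoeff ha]
  exact summable_rpow_Gamma_div_factorial_mul_norm_Gamma (by positivity) (by positivity) hμ

theorem integrableOn_weberIntegrand (ha : 0 < a) (hμ : 0 ≤ μ.re) (hα : 0 < (ν + 4 + μ).re) :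
    IntegrableOn (weberIntegrand a μ ν) (Ioi 0) :=
  IntegrableOn.congr_fun (integrable_tsum_of_summable_integral_norm
    (integrableOn_weberTerm ha hα) (summable_integral_norm_weberTerm ha hμ hα))
    (fun _ hx => (weberIntegrand_eq_tsum ha hx).symm) measurableSet_Ioi

theorem integral_weberIntegrand (ha : 0 < a) (hμ : 0 ≤ μ.re) (hα : 0 < (ν + 4 + μ).re) :
    ∫ x in Ioi (0 : ℝ), weberIntegrand a μ ν x =
      a * Complex.Gamma ((ν + 4 + μ) / 2) * (1 / Complex.Gamma (μ + 1)) *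
        ((2 * a : ℝ) : ℂ) ^ ((ν + 2 - μ) / 2) *
        kummerPhi ((ν + 4 + μ) / 2) (μ + 1) (1 / (2 * a)) := by
  rw [setIntegral_congr_fun measurableSet_Ioi fun _ hx => weberIntegrand_eq_tsum ha hx,
    ← integral_tsum_of_summable_integral_norm (integrableOn_weberTerm ha hα)
      (summable_integral_norm_weberTerm ha hμ hα),
    tsum_congr (integral_weberTerm ha hμ hα), tsum_mul_left, kummerPhi]

end Weber

theorem stmt4 (a : ℝ) (ha : 0 < a) (z : ℂ) (hz : 2 ≤ z.re) (ν : ℂ) (hν : |ν.im| ≤ 1)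
    (μc : ℂ) (hμc : μc = (2 * z + ν ^ 2) ^ (1 / 2 : ℂ)) :
    IntegrableOn (fun x : ℝ =>
        Complex.exp (-(x ^ 2 : ℝ) / (2 * a)) * (x : ℂ) ^ (ν + 3) * besselI μc (x / a))
      (Ioi 0) ∧
    Dnu ν a z =
      Complex.Gamma ((ν + 4 + μc) / 2) * (1 / Complex.Gamma (μc + 1)) *
        kummerPhi ((ν + 4 + μc) / 2) (μc + 1) (1 / (2 * a)) *
        Complex.exp (-(1 / (2 * a))) * ((2 * a : ℝ) : ℂ) ^ ((ν + 2 - μc) / 2) := by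
  have hw : 0 < (2 * z + ν ^ 2).re := by
    simp only [Complex.add_re, Complex.mul_re, sq]
    norm_num
    nlinarith [abs_le.mp hν]
  have hμ : 0 < μc.re := hμc ▸ Complex.re_cpow_one_half_pos (Or.inl hw)
  have hμsq : μc ^ 2 = 2 * z + ν ^ 2 := by
    rw [hμc, one_div, Complex.cpow_ofNat_inv_pow]
  -- `Re (μ²) ≥ Re (ν)² + 3` forces `Re μ > |Re ν|`
  have hα : 0 < (ν + 4 + μc).re := by
    have := congrArg Complex.re hμsq
    simp only [Complex.add_re, Complex.mul_re, sq] at this hw ⊢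
    norm_num at this hw ⊢
    nlinarith [abs_le.mp hν]
  refine ⟨integrableOn_weberIntegrand ha hμ.le hα, ?_⟩
  rw [Dnu, ← hμc]
  change _ * ∫ x in Ioi (0 : ℝ), weberIntegrand a μc ν x = _
  rw [integral_weberIntegrand ha hμ.le hα]
  have ha0 : (a : ℂ) ≠ 0 := Complex.ofReal_ne_zero.2 ha.ne'
  field_simp
end
end

section
/- Let B be a standard one-dimensional Brownian motion, a > 0 and x > 0. For every complex number ν, the entire extension L(x, ν) = e^{−xν²/2} · E[(A_x^{(0)} − a)^+ · e^{ν B_x}] satisfies the majorization |L(x, ν)| ≤ e^{(x/2)·Im(ν)²} · E[A_x^{(Re(ν))}]. -/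
open MeasureTheory ProbabilityTheory Set
open scoped ENNReal NNReal

noncomputable section

/-!
Write `ν = r + i s`. Since `|(A_x^{(0)} - a)^+ e^{ν B_x}| ≤ A_x^{(0)} e^{r B_x}` and
`|e^{-x ν² / 2}| = e^{x (s² - r²) / 2}`, it suffices to show the Cameron–Martin identity
`E[A_x^{(0)} e^{r B_x}] = e^{r² x / 2} E[A_x^{(r)}]`. By Tonelli both sides are integrals over
`w ∈ (0, x]`, and for each `w` the independence of `B_w` and `B_x - B_w` gives
`E[e^{2 B_w + r B_x}] = e^{(2 + r)² w / 2 + r² (x - w) / 2} = e^{r² x / 2} E[e^{2 (B_w + r w)}]`.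
-/

lemma lintegral_ofReal_exp_mul_gaussianReal (m : ℝ) (v : ℝ≥0) (c : ℝ) :
    ∫⁻ y, ENNReal.ofReal (Real.exp (c * y)) ∂gaussianReal m v =
      ENNReal.ofReal (Real.exp (m * c + v * c ^ 2 / 2)) := by
  rw [← ofReal_integral_eq_lintegral_ofReal (integrable_exp_mul_gaussianReal c)
    (ae_of_all _ fun _ => (Real.exp_pos _).le)]
  exact congrArg ENNReal.ofReal (congr_fun mgf_id_gaussianReal c)

section yorA

variable {Ω : Type*} {B : ℝ → Ω → ℝ}

lemma yorA_nonneg (B : ℝ → Ω → ℝ) (c x : ℝ) (ω : Ω) : 0 ≤ yorA B c x ω :=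
  setIntegral_nonneg measurableSet_Ioc fun _ _ => (Real.exp_pos _).le

lemma ofReal_yorA {ω : Ω} (hω : Continuous fun t => B t ω) (c x : ℝ) :
    ENNReal.ofReal (yorA B c x ω) =
      ∫⁻ w in Ioc 0 x, ENNReal.ofReal (Real.exp (2 * (B w ω + c * w))) :=
  ofReal_integral_eq_lintegral_ofReal (by fun_prop : Continuous _).integrableOn_Ioc
    (ae_of_all _ fun _ => (Real.exp_pos _).le)

variable [MeasurableSpace Ω]

lemma measurable_uncurry_exp_path (hmeas : ∀ t, Measurable (B t))
    (hcont : ∀ ω, Continuous fun t => B t ω) (c : ℝ) :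
    Measurable (Function.uncurry fun ω w => Real.exp (2 * (B w ω + c * w))) := by
  have hjoint : Measurable (Function.uncurry B) :=
    measurable_uncurry_of_continuous_of_measurable hcont hmeas
  exact (hjoint.comp measurable_swap).add (measurable_snd.const_mul c) |>.const_mul 2 |>.exp

lemma measurable_yorA (hmeas : ∀ t, Measurable (B t)) (hcont : ∀ ω, Continuous fun t => B t ω)
    (c x : ℝ) : Measurable (yorA B c x) :=
  ((measurable_uncurry_exp_path hmeas hcont c).stronglyMeasurable.integral_prod_right
    (ν := volume.restrict (Ioc 0 x))).measurable

end yorA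

namespace IsBrownianMotion

variable {Ω : Type*} [MeasurableSpace Ω] {μ : Measure Ω} {B : ℝ → Ω → ℝ}

protected lemma isProbabilityMeasure (hB : IsBrownianMotion μ B) : IsProbabilityMeasure μ := hB.1

protected lemma measurable (hB : IsBrownianMotion μ B) (t : ℝ) : Measurable (B t) := hB.2.1 t

lemma congr_ae (hB : IsBrownianMotion μ B) {B' : ℝ → Ω → ℝ} (hmeas : ∀ t, Measurable (B' t))
    (h : ∀ᵐ ω ∂μ, ∀ t, B' t ω = B t ω) : IsBrownianMotion μ B' := by
  obtain ⟨hprob, -, hcont, h0, hgauss, hindep⟩ := hB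
  have hinc : ∀ s t, (fun ω => B' t ω - B' s ω) =ᵐ[μ] fun ω => B t ω - B s ω := fun s t => by
    filter_upwards [h] with ω hω
    rw [hω, hω]
  refine ⟨hprob, hmeas, ?_, ?_, fun s t hs hst => ?_, fun n t ht hmono => ?_⟩
  · filter_upwards [hcont, h] with ω hω hω'
    simpa only [hω'] using hω
  · filter_upwards [h0, h] with ω hω hω'
    rw [hω', hω]
  · rw [Measure.map_congr (hinc s t)]
    exact hgauss s t hs hst
  · exact (hindep n t ht hmono).congr fun i => (hinc _ _).symm

lemma exists_continuous_modification (hB : IsBrownianMotion μ B) :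
    ∃ B' : ℝ → Ω → ℝ, IsBrownianMotion μ B' ∧ (∀ ω, Continuous fun t => B' t ω) ∧
      ∀ᵐ ω ∂μ, ∀ t, B' t ω = B t ω := by
  have hcont : ∀ᵐ ω ∂μ, Continuous fun t => B t ω := hB.2.2.1
  set N := toMeasurable μ {ω | ¬Continuous fun t => B t ω}
  have hN : ∀ᵐ ω ∂μ, ω ∉ N := by
    simp only [ae_iff, not_not, ofPred_mem_eq, N, measure_toMeasurable]
    exact ae_iff.mp hcont
  have hae : ∀ᵐ ω ∂μ, ∀ t, Nᶜ.indicator (B t) ω = B t ω := by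
    filter_upwards [hN] with ω hω t
    exact indicator_of_mem (mem_compl hω) _
  refine ⟨fun t => Nᶜ.indicator (B t), hB.congr_ae (fun t => ?_) hae, fun ω => ?_, hae⟩
  · exact (hB.measurable t).indicator (measurableSet_toMeasurable _ _).compl
  · by_cases hω : ω ∈ N
    · simpa only [indicator_of_notMem (notMem_compl_iff.mpr hω)] using continuous_const
    · simpa only [indicator_of_mem (mem_compl hω)] using
        not_not.mp fun h => hω (subset_toMeasurable _ _ h)

lemma lintegral_exp_mul_sub (hB : IsBrownianMotion μ B) (c : ℝ) {s t : ℝ} (hs : 0 ≤ s)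
    (hst : s ≤ t) :
    ∫⁻ ω, ENNReal.ofReal (Real.exp (c * (B t ω - B s ω))) ∂μ =
      ENNReal.ofReal (Real.exp (c ^ 2 * (t - s) / 2)) := by
  obtain ⟨-, hmeas, -, -, hgauss, -⟩ := hB
  rw [← lintegral_map (f := fun y => ENNReal.ofReal (Real.exp (c * y)))
    (g := fun ω => B t ω - B s ω) (by fun_prop) ((hmeas t).sub (hmeas s)), hgauss s t hs hst,
    lintegral_ofReal_exp_mul_gaussianReal, Real.coe_toNNReal _ (sub_nonneg.2 hst)]
  ring_nf

lemma indepFun_sub (hB : IsBrownianMotion μ B) {s t u : ℝ} (hs : 0 ≤ s) (hst : s ≤ t)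
    (htu : t ≤ u) :
    IndepFun (fun ω => B t ω - B s ω) (fun ω => B u ω - B t ω) μ := by
  have hmono : Monotone ![s, t, u] :=
    ((Subsingleton.monotone (α := Fin 1) ![u]).vecCons htu).vecCons hst
  obtain ⟨-, -, -, -, -, hindep⟩ := hB
  exact (hindep 2 ![s, t, u] (fun i => hs.trans (hmono (Fin.zero_le i)))
    hmono).indepFun (i := 0) (j := 1) (by decide)

lemma lintegral_exp_mul_add_mul (hB : IsBrownianMotion μ B) (a b : ℝ) {s t : ℝ} (hs : 0 ≤ s)
    (hst : s ≤ t) :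
    ∫⁻ ω, ENNReal.ofReal (Real.exp (a * B s ω + b * B t ω)) ∂μ =
      ENNReal.ofReal (Real.exp ((a + b) ^ 2 * s / 2 + b ^ 2 * (t - s) / 2)) := by
  have hzero : ∀ᵐ ω ∂μ, B 0 ω = 0 := hB.2.2.2.1
  have hsplit : ∀ᵐ ω ∂μ, ENNReal.ofReal (Real.exp (a * B s ω + b * B t ω)) =
      ENNReal.ofReal (Real.exp ((a + b) * (B s ω - B 0 ω))) *
        ENNReal.ofReal (Real.exp (b * (B t ω - B s ω))) := by
    filter_upwards [hzero] with ω h0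
    rw [h0, ← ENNReal.ofReal_mul (Real.exp_pos _).le, ← Real.exp_add]
    ring_nf
  have hg : ∀ c : ℝ, Measurable fun y : ℝ => ENNReal.ofReal (Real.exp (c * y)) := fun c => by
    fun_prop
  have hmeas := hB.measurable
  have hindep : IndepFun (fun ω => ENNReal.ofReal (Real.exp ((a + b) * (B s ω - B 0 ω))))
      (fun ω => ENNReal.ofReal (Real.exp (b * (B t ω - B s ω)))) μ :=
    (hB.indepFun_sub le_rfl hs hst).comp (hg (a + b)) (hg b)
  rw [lintegral_congr_ae hsplit, lintegral_mul_eq_lintegral_mul_lintegral_of_indepFun''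
    (by fun_prop) (by fun_prop) hindep,
    hB.lintegral_exp_mul_sub _ le_rfl hs, hB.lintegral_exp_mul_sub _ hs hst,
    ← ENNReal.ofReal_mul (Real.exp_pos _).le, ← Real.exp_add, sub_zero]

lemma lintegral_exp_two_mul_add (hB : IsBrownianMotion μ B) (c : ℝ) {w : ℝ} (hw : 0 ≤ w) :
    ∫⁻ ω, ENNReal.ofReal (Real.exp (2 * (B w ω + c * w))) ∂μ =
      ENNReal.ofReal (Real.exp (2 * (1 + c) * w)) := by
  calc ∫⁻ ω, ENNReal.ofReal (Real.exp (2 * (B w ω + c * w))) ∂μ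
      = ∫⁻ ω, ENNReal.ofReal (Real.exp (2 * c * w)) *
          ENNReal.ofReal (Real.exp (2 * B w ω + 0 * B w ω)) ∂μ := by
        refine lintegral_congr fun ω => ?_
        rw [← ENNReal.ofReal_mul (Real.exp_pos _).le, ← Real.exp_add]
        ring_nf
    _ = ENNReal.ofReal (Real.exp (2 * c * w)) *
          ENNReal.ofReal (Real.exp ((2 + 0) ^ 2 * w / 2 + 0 ^ 2 * (w - w) / 2)) := by
        rw [lintegral_const_mul' _ _ ENNReal.ofReal_ne_top,
          hB.lintegral_exp_mul_add_mul 2 0 hw le_rfl]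
    _ = ENNReal.ofReal (Real.exp (2 * (1 + c) * w)) := by
        rw [← ENNReal.ofReal_mul (Real.exp_pos _).le, ← Real.exp_add]
        ring_nf

variable (hB : IsBrownianMotion μ B) (hcont : ∀ ω, Continuous fun t => B t ω)
include hB hcont

lemma lintegral_ofReal_yorA (c x : ℝ) :
    ∫⁻ ω, ENNReal.ofReal (yorA B c x ω) ∂μ =
      ∫⁻ w in Ioc 0 x, ENNReal.ofReal (Real.exp (2 * (1 + c) * w)) := by
  have := hB.isProbabilityMeasure
  simp_rw [ofReal_yorA (hcont _)]
  rw [lintegral_lintegral_swap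
    (measurable_uncurry_exp_path hB.measurable hcont c).ennreal_ofReal.aemeasurable]
  exact setLIntegral_congr_fun measurableSet_Ioc fun w hw => hB.lintegral_exp_two_mul_add c hw.1.le

lemma lintegral_ofReal_yorA_lt_top (c x : ℝ) : ∫⁻ ω, ENNReal.ofReal (yorA B c x ω) ∂μ < ∞ := by
  rw [hB.lintegral_ofReal_yorA hcont]
  exact (Continuous.integrableOn_Ioc (by fun_prop)).setLIntegral_lt_top

lemma lintegral_ofReal_yorA_zero_mul_exp (c x : ℝ) :
    ∫⁻ ω, ENNReal.ofReal (yorA B 0 x ω * Real.exp (c * B x ω)) ∂μ =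
      ENNReal.ofReal (Real.exp (c ^ 2 * x / 2)) * ∫⁻ ω, ENNReal.ofReal (yorA B c x ω) ∂μ := by
  have := hB.isProbabilityMeasure
  have hmeas : Measurable (Function.uncurry fun ω w => ENNReal.ofReal
      (Real.exp (2 * (B w ω + 0 * w))) * ENNReal.ofReal (Real.exp (c * B x ω))) := by
    have := measurable_uncurry_exp_path hB.measurable hcont 0
    have := hB.measurable x
    fun_prop
  calc ∫⁻ ω, ENNReal.ofReal (yorA B 0 x ω * Real.exp (c * B x ω)) ∂μ
      = ∫⁻ ω, (∫⁻ w in Ioc 0 x, ENNReal.ofReal (Real.exp (2 * (B w ω + 0 * w))) *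
          ENNReal.ofReal (Real.exp (c * B x ω))) ∂μ := by
        refine lintegral_congr fun ω => ?_
        rw [ENNReal.ofReal_mul (yorA_nonneg B 0 x ω), ofReal_yorA (hcont ω),
          lintegral_mul_const' _ _ ENNReal.ofReal_ne_top]
    _ = ∫⁻ w in Ioc 0 x, (∫⁻ ω, ENNReal.ofReal (Real.exp (2 * (B w ω + 0 * w))) *
          ENNReal.ofReal (Real.exp (c * B x ω)) ∂μ) :=
        lintegral_lintegral_swap hmeas.aemeasurable
    _ = ∫⁻ w in Ioc 0 x, ENNReal.ofReal (Real.exp (c ^ 2 * x / 2)) *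
          ENNReal.ofReal (Real.exp (2 * (1 + c) * w)) := by
        refine setLIntegral_congr_fun measurableSet_Ioc fun w hw => ?_
        calc _ = ∫⁻ ω, ENNReal.ofReal (Real.exp (2 * B w ω + c * B x ω)) ∂μ := by
              refine lintegral_congr fun ω => ?_
              rw [← ENNReal.ofReal_mul (Real.exp_pos _).le, ← Real.exp_add]
              ring_nf
          _ = _ := by
              rw [hB.lintegral_exp_mul_add_mul 2 c hw.1.le hw.2,
                ← ENNReal.ofReal_mul (Real.exp_pos _).le, ← Real.exp_add]
              ring_nf
    _ = _ := by
        rw [lintegral_const_mul _ (by fun_prop), hB.lintegral_ofReal_yorA hcont]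

lemma norm_integral_posPart_mul_cexp_le {a : ℝ} (ha : 0 ≤ a) (x : ℝ) (ν : ℂ) :
    ‖∫ ω, (↑(max (yorA B 0 x ω - a) 0) : ℂ) * Complex.exp (ν * B x ω) ∂μ‖ ≤
      Real.exp (ν.re ^ 2 * x / 2) * ∫ ω, yorA B ν.re x ω ∂μ := by
  have hpt : ∀ ω, ‖(↑(max (yorA B 0 x ω - a) 0) : ℂ) * Complex.exp (ν * B x ω)‖ ≤
      yorA B 0 x ω * Real.exp (ν.re * B x ω) := fun ω => by
    rw [norm_mul, Complex.norm_real, Real.norm_of_nonneg (le_max_right _ _), Complex.norm_exp,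
      Complex.re_mul_ofReal]
    gcongr
    exact max_le (sub_le_self _ ha) (yorA_nonneg B 0 x ω)
  rw [integral_eq_lintegral_of_nonneg_ae (ae_of_all _ (yorA_nonneg B _ x))
      (measurable_yorA hB.measurable hcont _ x).aestronglyMeasurable,
    ← ENNReal.toReal_ofReal (Real.exp_pos _).le, ← ENNReal.toReal_mul,
    ← hB.lintegral_ofReal_yorA_zero_mul_exp hcont]
  refine (norm_integral_le_lintegral_norm _).trans (ENNReal.toReal_mono ?_
    (lintegral_mono fun ω => ENNReal.ofReal_le_ofReal (hpt ω)))
  rw [hB.lintegral_ofReal_yorA_zero_mul_exp hcont]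
  exact ENNReal.mul_ne_top ENNReal.ofReal_ne_top (hB.lintegral_ofReal_yorA_lt_top hcont _ x).ne

end IsBrownianMotion

theorem stmt10_general {Ω : Type*} [MeasurableSpace Ω] (μ : Measure Ω) (B : ℝ → Ω → ℝ)
    (hB : IsBrownianMotion μ B) (a x : ℝ) (ha : 0 < a) (ν : ℂ) :
    ‖Complex.exp (-(x : ℂ) * ν ^ 2 / 2) *
        ∫ ω, (↑(max (yorA B 0 x ω - a) 0) : ℂ) * Complex.exp (ν * B x ω) ∂μ‖
      ≤ Real.exp (x / 2 * ν.im ^ 2) * ∫ ω, yorA B ν.re x ω ∂μ := by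
  obtain ⟨W, hW, hcont, hWB⟩ := hB.exists_continuous_modification
  have hyorA : ∀ c, yorA W c x =ᵐ[μ] yorA B c x := fun c => by
    filter_upwards [hWB] with ω hω
    simp only [yorA, hω]
  have hI : ∫ ω, (↑(max (yorA B 0 x ω - a) 0) : ℂ) * Complex.exp (ν * B x ω) ∂μ =
      ∫ ω, (↑(max (yorA W 0 x ω - a) 0) : ℂ) * Complex.exp (ν * W x ω) ∂μ := by
    refine integral_congr_ae ?_
    filter_upwards [hyorA 0, hWB] with ω hA hω
    rw [hA, hω]
  have hexp : (-(x : ℂ) * ν ^ 2 / 2).re + ν.re ^ 2 * x / 2 = x / 2 * ν.im ^ 2 := by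
    simp only [sq, neg_mul, Complex.div_ofNat_re, Complex.neg_re, Complex.mul_re,
      Complex.ofReal_re, Complex.ofReal_im, Complex.mul_im, zero_mul, sub_zero]
    ring
  rw [hI, ← integral_congr_ae (hyorA ν.re), norm_mul, Complex.norm_exp]
  calc _ ≤ Real.exp (-(x : ℂ) * ν ^ 2 / 2).re *
        (Real.exp (ν.re ^ 2 * x / 2) * ∫ ω, yorA W ν.re x ω ∂μ) := by
        gcongr
        exact hW.norm_integral_posPart_mul_cexp_le hcont ha.le x ν
    _ = _ := by rw [← mul_assoc, ← Real.exp_add, hexp]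

theorem stmt10 {Ω : Type*} [MeasurableSpace Ω] (μ : Measure Ω) (B : ℝ → Ω → ℝ)
    (hB : IsBrownianMotion μ B) (a x : ℝ) (ha : 0 < a) (hx : 0 < x) (ν : ℂ) :
    ‖Complex.exp (-(x : ℂ) * ν ^ 2 / 2) *
        ∫ ω, (↑(max (yorA B 0 x ω - a) 0) : ℂ) * Complex.exp (ν * B x ω) ∂μ‖
      ≤ Real.exp (x / 2 * ν.im ^ 2) * ∫ ω, yorA B ν.re x ω ∂μ :=
  stmt10_general μ B hB a x ha ν
end
end
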